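/- arXiv:1705.02831 — 4 statements merged into one kernel-verified Lean document; each statement's English description precedes it below -/
import Mathlib

section
/- In a strongly distributive skew lattice, Green's relation D is a congruence with respect to both ∧ and ∨: if x D x' and y D y' then (x ∧ y) D (x' ∧ y') and (x ∨ y) D (x' ∨ y'). -/
structure SkewLattice (L : Type*) where
  meet : L → L → L
  join : L → L → L
  meet_idem : ∀ x, meet x x = x
  join_idem : ∀ x, join x x = x
  meet_assoc : ∀ x y z, meet (meet x y) z = meet x (meet y z)
  join_assoc : ∀ x y z, join (join x y) z = join x (join y z)
  absorb1 : ∀ x y, meet x (join x y) = x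
  absorb2 : ∀ x y, join x (meet x y) = x
  absorb3 : ∀ x y, join (meet x y) y = y
  absorb4 : ∀ x y, meet (join x y) y = y

def StronglyDistributive {L : Type*} (S : SkewLattice L) : Prop :=
  (∀ x y z, S.meet (S.join x y) z = S.join (S.meet x z) (S.meet y z)) ∧
  (∀ x y z, S.meet x (S.join y z) = S.join (S.meet x y) (S.meet x z))

/-- Green's relation D. -/
def GreensD {L : Type*} (S : SkewLattice L) (x y : L) : Prop :=
  S.meet (S.meet x y) x = x ∧ S.meet (S.meet y x) y = y

/-!
Strong distributivity makes the meet reduct a normal band: `a ∧ b ∧ c ∧ d = a ∧ c ∧ b ∧ d`.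
In a normal band the natural preorder `x ≼ y :↔ x ∧ y ∧ x = x` is transitive and compatible
with `∧`, and distributivity shows that `x ∨ y` is the least upper bound of `x` and `y` for it.
Since `D` is the symmetric part of `≼`, it is then a congruence for both operations.
-/

namespace SkewLattice

variable {L : Type*} (S : SkewLattice L)

local infixl:70 " ⬝ " => S.meet
local infixl:65 " ⊹ " => S.join

def Preceq (x y : L) : Prop :=
  x ⬝ y ⬝ x = x

/- Expand `a = a ∧ (a ∨ c)` and duplicate `b ∧ c`; distributing `(a ∨ c) ∧ b` gives
`a ∧ c ∧ b ∧ c ∧ a`, and the mirror step with `a = (b ∧ a) ∨ a` absorbs the last `c`. -/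
lemma meet_sandwich_comm (hSD : StronglyDistributive S) (a b c : L) :
    a ⬝ b ⬝ c ⬝ a = a ⬝ c ⬝ b ⬝ a := by
  have hdup : a ⬝ (a ⊹ c) ⬝ b ⬝ c ⬝ b ⬝ c ⬝ a = a ⬝ (a ⊹ c) ⬝ b ⬝ c ⬝ a := by
    rw [S.meet_assoc (a ⬝ (a ⊹ c) ⬝ b ⬝ c) b c, S.meet_assoc (a ⬝ (a ⊹ c)) b c,
      S.meet_assoc (a ⬝ (a ⊹ c)) (b ⬝ c) (b ⬝ c), S.meet_idem (b ⬝ c)]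
  calc a ⬝ b ⬝ c ⬝ a
      = a ⬝ (a ⊹ c) ⬝ b ⬝ c ⬝ a := by rw [S.absorb1]
    _ = a ⬝ (a ⊹ c) ⬝ b ⬝ c ⬝ b ⬝ c ⬝ a := hdup.symm
    _ = a ⬝ ((a ⬝ b) ⊹ (c ⬝ b)) ⬝ c ⬝ b ⬝ c ⬝ a := by
        rw [S.meet_assoc a (a ⊹ c) b, hSD.1 a c b]
    _ = a ⬝ c ⬝ b ⬝ c ⬝ a := by
        rw [S.meet_assoc (a ⬝ ((a ⬝ b) ⊹ (c ⬝ b))) c b,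
          S.meet_assoc a ((a ⬝ b) ⊹ (c ⬝ b)) (c ⬝ b),
          S.absorb4 (a ⬝ b) (c ⬝ b), ← S.meet_assoc a c b]
    _ = a ⬝ c ⬝ b ⬝ c ⬝ ((b ⬝ a) ⊹ a) := by rw [S.absorb3 b a]
    _ = a ⬝ c ⬝ b ⬝ ((c ⬝ (b ⬝ a)) ⊹ (c ⬝ a)) := by
        rw [S.meet_assoc (a ⬝ c ⬝ b) c ((b ⬝ a) ⊹ a), hSD.2 c (b ⬝ a) a]
    _ = a ⬝ c ⬝ b ⬝ (((c ⬝ b) ⊹ c) ⬝ a) := by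
        rw [← S.meet_assoc c b a, ← hSD.1 (c ⬝ b) c a]
    _ = a ⬝ c ⬝ b ⬝ a := by
        rw [S.meet_assoc a c b, ← S.meet_assoc (a ⬝ (c ⬝ b)) ((c ⬝ b) ⊹ c) a,
          S.meet_assoc a (c ⬝ b) ((c ⬝ b) ⊹ c), S.absorb1 (c ⬝ b) c]

lemma meet_normal (hSD : StronglyDistributive S) (a b c d : L) :
    a ⬝ b ⬝ c ⬝ d = a ⬝ c ⬝ b ⬝ d := by
  calc a ⬝ b ⬝ c ⬝ d
      = (a ⬝ b ⬝ c ⬝ d) ⬝ (a ⬝ b ⬝ c ⬝ d) := (S.meet_idem _).symm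
    _ = (a ⬝ b ⬝ c) ⬝ (d ⬝ (a ⬝ b) ⬝ c ⬝ d) := by simp only [S.meet_assoc]
    _ = (a ⬝ b ⬝ c) ⬝ (d ⬝ c ⬝ (a ⬝ b) ⬝ d) := by rw [meet_sandwich_comm S hSD d (a ⬝ b) c]
    _ = (a ⬝ (b ⬝ (c ⬝ d)) ⬝ c ⬝ a) ⬝ (b ⬝ d) := by simp only [S.meet_assoc]
    _ = (a ⬝ c ⬝ (b ⬝ (c ⬝ d)) ⬝ a) ⬝ (b ⬝ d) := by
        rw [meet_sandwich_comm S hSD a (b ⬝ (c ⬝ d)) c]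
    _ = (a ⬝ c) ⬝ (b ⬝ c ⬝ (d ⬝ a) ⬝ b ⬝ d) := by simp only [S.meet_assoc]
    _ = (a ⬝ c) ⬝ (b ⬝ (d ⬝ a) ⬝ c ⬝ b ⬝ d) := by rw [meet_sandwich_comm S hSD b c (d ⬝ a)]
    _ = (a ⬝ c ⬝ (b ⬝ d)) ⬝ (a ⬝ c ⬝ (b ⬝ d)) := by simp only [S.meet_assoc]
    _ = a ⬝ c ⬝ b ⬝ d := by rw [S.meet_idem, ← S.meet_assoc]

lemma preceq_join_left (x y : L) : S.Preceq x (x ⊹ y) := by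
  rw [Preceq, S.absorb1, S.meet_idem]

lemma preceq_join_right (x y : L) : S.Preceq y (x ⊹ y) := by
  rw [Preceq, S.meet_assoc, S.absorb4, S.meet_idem]

lemma Preceq.trans (hSD : StronglyDistributive S) {x y z : L}
    (hxy : S.Preceq x y) (hyz : S.Preceq y z) : S.Preceq x z := by
  unfold Preceq at *
  calc x ⬝ z ⬝ x
      = x ⬝ y ⬝ x ⬝ z ⬝ x := by rw [hxy]
    _ = x ⬝ y ⬝ z ⬝ x ⬝ x := by rw [meet_normal S hSD (x ⬝ y) x z x]
    _ = x ⬝ y ⬝ y ⬝ z ⬝ x := by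
        rw [S.meet_assoc _ x x, S.meet_idem, S.meet_assoc x y y, S.meet_idem]
    _ = x ⬝ (y ⬝ z ⬝ y) ⬝ x := by rw [meet_normal S hSD (x ⬝ y) y z x]; simp only [S.meet_assoc]
    _ = x := by rw [hyz, hxy]

lemma Preceq.meet (hSD : StronglyDistributive S) {x x' y y' : L}
    (hx : S.Preceq x x') (hy : S.Preceq y y') : S.Preceq (x ⬝ y) (x' ⬝ y') := by
  unfold Preceq at *
  calc (x ⬝ y) ⬝ (x' ⬝ y') ⬝ (x ⬝ y)
      = x ⬝ y ⬝ x' ⬝ (y' ⬝ (x ⬝ y)) := by simp only [S.meet_assoc]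
    _ = x ⬝ x' ⬝ y ⬝ (y' ⬝ (x ⬝ y)) := by rw [meet_normal S hSD x y x' (y' ⬝ (x ⬝ y))]
    _ = (x ⬝ x') ⬝ (y ⬝ y') ⬝ x ⬝ y := by simp only [S.meet_assoc]
    _ = (x ⬝ x') ⬝ x ⬝ (y ⬝ y') ⬝ y := by rw [meet_normal S hSD (x ⬝ x') (y ⬝ y') x y]
    _ = x ⬝ y := by rw [hx, S.meet_assoc x (y ⬝ y') y, hy]

lemma meet_meet_of_preceq (hSD : StronglyDistributive S) {a z : L} (ha : S.Preceq a z)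
    (b : L) : b ⬝ z ⬝ a = b ⬝ a := by
  unfold Preceq at ha
  calc b ⬝ z ⬝ a
      = b ⬝ z ⬝ (a ⬝ z ⬝ a) := by rw [ha]
    _ = b ⬝ z ⬝ a ⬝ (z ⬝ a) := by simp only [S.meet_assoc]
    _ = b ⬝ a ⬝ z ⬝ (z ⬝ a) := by rw [meet_normal S hSD b z a (z ⬝ a)]
    _ = b ⬝ (a ⬝ z ⬝ a) := by
        rw [S.meet_assoc _ z, ← S.meet_assoc z z a, S.meet_idem]; simp only [S.meet_assoc]
    _ = b ⬝ a := by rw [ha]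

lemma join_preceq (hSD : StronglyDistributive S) {a b z : L}
    (ha : S.Preceq a z) (hb : S.Preceq b z) : S.Preceq (a ⊹ b) z := by
  have hza : a ⬝ z ⬝ (a ⊹ b) = a := by
    rw [hSD.2, ha, S.meet_assoc a z b, S.absorb2]
  have hzb : b ⬝ z ⬝ (a ⊹ b) = (b ⬝ a) ⊹ b := by
    rw [hSD.2, hb, meet_meet_of_preceq S hSD ha]
  have hab : (a ⊹ b) ⬝ a ⊹ b = a ⊹ b := by
    conv_rhs => rw [← S.meet_idem (a ⊹ b), hSD.2 (a ⊹ b) a b, S.absorb4 a b]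
  calc (a ⊹ b) ⬝ z ⬝ (a ⊹ b)
      = a ⬝ z ⬝ (a ⊹ b) ⊹ b ⬝ z ⬝ (a ⊹ b) := by rw [hSD.1 a b z, hSD.1]
    _ = (a ⬝ a ⊹ b ⬝ a) ⊹ b := by rw [hza, hzb, S.meet_idem, S.join_assoc]
    _ = a ⊹ b := by rw [← hSD.1, hab]

lemma Preceq.join (hSD : StronglyDistributive S) {x x' y y' : L}
    (hx : S.Preceq x x') (hy : S.Preceq y y') : S.Preceq (x ⊹ y) (x' ⊹ y') :=
  join_preceq S hSD (hx.trans S hSD (preceq_join_left S x' y'))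
    (hy.trans S hSD (preceq_join_right S x' y'))

end SkewLattice

theorem greensD_congruence {L : Type*} (S : SkewLattice L)
    (hSD : StronglyDistributive S) (x x' y y' : L)
    (hx : GreensD S x x') (hy : GreensD S y y') :
    GreensD S (S.meet x y) (S.meet x' y') ∧ GreensD S (S.join x y) (S.join x' y') :=
  ⟨⟨SkewLattice.Preceq.meet S hSD hx.1 hy.1, SkewLattice.Preceq.meet S hSD hx.2 hy.2⟩,
    ⟨SkewLattice.Preceq.join S hSD hx.1 hy.1, SkewLattice.Preceq.join S hSD hx.2 hy.2⟩⟩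
end

section
/- If a strongly distributive skew lattice S has a maximal element 1 with respect to the natural partial order (i.e., x ≤ 1 for all x), then S is commutative: x ∧ y = y ∧ x for all x, y. -/
/-! Since `w ∨ 1 = 1`, distributivity gives `z = z ∧ (w ∨ 1) = (z ∧ w) ∨ z`, and in any skew lattice
`x ∨ y = y` forces `x ∧ y = x`; hence `z ∧ w ∧ z = z ∧ w`. Dually `z = (1 ∨ w) ∧ z = z ∨ (w ∧ z)`
gives `z ∧ w ∧ z = w ∧ z`, so `z ∧ w = w ∧ z`. -/

namespace SkewLattice

variable {L : Type*} (S : SkewLattice L)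

theorem meet_eq_left_of_join_eq_right {x y : L} (h : S.join x y = y) : S.meet x y = x := by
  rw [← h, S.absorb1]

theorem meet_eq_right_of_join_eq_left {x y : L} (h : S.join x y = x) : S.meet x y = y := by
  rw [← h, S.absorb4]

theorem join_top {one : L} (htop : ∀ x, S.meet x one = x) (w : L) : S.join w one = one := by
  simpa only [htop w] using S.absorb3 w one

theorem top_join {one : L} (htop : ∀ x, S.meet one x = x) (w : L) : S.join one w = one := by
  simpa only [htop w] using S.absorb2 one w

theorem meet_meet_self {one : L} (htop : ∀ x, S.meet x one = x)
    (hdistrib : ∀ x y z, S.meet x (S.join y z) = S.join (S.meet x y) (S.meet x z)) (z w : L) :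
    S.meet (S.meet z w) z = S.meet z w := by
  apply meet_eq_left_of_join_eq_right
  simpa only [S.join_top htop, htop z] using (hdistrib z w one).symm

theorem meet_self_meet {one : L} (htop : ∀ x, S.meet one x = x)
    (hdistrib : ∀ x y z, S.meet (S.join x y) z = S.join (S.meet x z) (S.meet y z)) (z w : L) :
    S.meet z (S.meet w z) = S.meet w z := by
  apply meet_eq_right_of_join_eq_left
  simpa only [S.top_join htop, htop z] using (hdistrib one w z).symm

end SkewLattice

theorem max_implies_commutative {L : Type*} (S : SkewLattice L)
    (hSD : StronglyDistributive S) (one : L)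
    (hmax : ∀ x, S.meet x one = x ∧ S.meet one x = x) :
    ∀ x y, S.meet x y = S.meet y x := by
  obtain ⟨hdistrib_right, hdistrib_left⟩ := hSD
  intro x y
  calc S.meet x y = S.meet (S.meet x y) x :=
        (S.meet_meet_self (fun z => (hmax z).1) hdistrib_left x y).symm
    _ = S.meet x (S.meet y x) := S.meet_assoc x y x
    _ = S.meet y x := S.meet_self_meet (fun z => (hmax z).2) hdistrib_right x y
end

section
/- Two elements x, y of a product skew lattice ∏_{i∈I} P̂ (where P̂ = P ∪ {0} with the flat skew lattice structure) are D-equivalent if and only if for every index i, x_i = 0 ⟺ y_i = 0. -/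
/-- The meet on P̂ = P ∪ {0} (with `none` playing the role of 0): x ∧ y = x for x, y ∈ P,
and 0 is absorbing. -/
def pMeet {P : Type*} : Option P → Option P → Option P
  | some a, some _ => some a
  | _, _ => none

/-- The join on P̂ = P ∪ {0}: x ∨ y = y for x, y ∈ P, and 0 is neutral. -/
def pJoin {P : Type*} : Option P → Option P → Option P
  | some _, some b => some b
  | none, y => y
  | x, none => x

/-- Green's relation D on the product skew lattice ∏_{i∈I} P̂ with componentwise
operations. -/
def prodD {I P : Type*} (x y : I → Option P) : Prop :=
  (fun i => pMeet (pMeet (x i) (y i)) (x i)) = x ∧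
  (fun i => pMeet (pMeet (y i) (x i)) (y i)) = y

theorem pMeet_pMeet_self_eq_self_iff {P : Type*} (a b : Option P) :
    pMeet (pMeet a b) a = a ↔ (b = none → a = none) := by
  cases a <;> cases b <;> simp [pMeet]

theorem prod_phat_D_iff {I P : Type*} (x y : I → Option P) :
    prodD x y ↔ ∀ i, x i = none ↔ y i = none := by
  simp only [prodD, funext_iff, pMeet_pMeet_self_eq_self_iff, ← forall_and, iff_def']
end

section
/- Let C be the two-object category with objects V, E and morphisms s, t : V → E (so presheaves on C are directed graphs). There are exactly 4 Grothendieck topologies on C. -/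
/-!
A topology `J` on the walking parallel pair is determined by the set of objects admitting a
covering sieve other than the maximal one. Since the only nonidentity arrows are `s, t : V ⟶ E`,
every proper sieve on `X` lies in the sieve of nonidentity arrows into `X`, and a sieve covers
exactly when every arrow it misses starts at such an object. Conversely every set of objects
arises in this way, so the topologies correspond to the four subsets of `{V, E}`.
-/

open CategoryTheory CategoryTheory.Limits

namespace CategoryTheory.GrothendieckTopology

variable {C : Type*} [Category C]

def properlyCovered (J : GrothendieckTopology C) : Set C :=
  {X | ∃ S ∈ J X, S ≠ ⊤}

/-- The largest topology whose properly covered objects all lie in `P`. -/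
def ofProperlyCovered (P : Set C) : GrothendieckTopology C where
  sieves X := {S | ∀ ⦃Y⦄ (f : Y ⟶ X), ¬ S f → Y ∈ P}
  top_mem' _ _ _ hf := (hf True.intro).elim
  pullback_stable' _ _ _ g hS _ f hf := hS (f ≫ g) hf
  transitive' X S hS R hR Y f hf := by
    by_cases hSf : S f
    · exact hR hSf (𝟙 Y) (by simpa using hf)
    · exact hS f hSf

lemma properlyCovered_ofProperlyCovered_subset (P : Set C) :
    (ofProperlyCovered P).properlyCovered ⊆ P := by
  rintro X ⟨S, hS, hne⟩
  exact hS (𝟙 X) (mt Sieve.id_mem_iff_eq_top.mp hne)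

lemma le_ofProperlyCovered_properlyCovered (J : GrothendieckTopology C) :
    J ≤ ofProperlyCovered J.properlyCovered := by
  intro X S hS Y f hf
  refine ⟨S.pullback f, J.pullback_stable f hS, fun htop => hf ?_⟩
  simpa using Sieve.id_mem_iff_eq_top.mpr htop

end CategoryTheory.GrothendieckTopology

namespace CategoryTheory.Limits.WalkingParallelPair

open GrothendieckTopology

lemma eq_or_eq_of_comp {X Y Z : WalkingParallelPair} (g : Z ⟶ Y) (f : Y ⟶ X) :
    Z = Y ∨ Y = X := by
  change WalkingParallelPairHom Z Y at g
  change WalkingParallelPairHom Y X at f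
  cases g <;> cases f <;> simp

lemma hom_self_eq_id {X : WalkingParallelPair} (f : X ⟶ X) : f = 𝟙 X := by
  change WalkingParallelPairHom X X at f
  cases f
  rfl

def maxProperSieve (X : WalkingParallelPair) : Sieve X where
  arrows Y _ := Y ≠ X
  downward_closed {Y Z} f hY g := by
    rcases eq_or_eq_of_comp g f with rfl | rfl
    · exact hY
    · exact (hY rfl).elim

lemma maxProperSieve_ne_top (X : WalkingParallelPair) : maxProperSieve X ≠ ⊤ :=
  fun h => (Sieve.id_mem_iff_eq_top.mpr h : X ≠ X) rfl

lemma le_maxProperSieve {X : WalkingParallelPair} {S : Sieve X} (hS : S ≠ ⊤) :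
    S ≤ maxProperSieve X := by
  rintro Y f hf rfl
  exact hS (Sieve.id_mem_iff_eq_top.mp (hom_self_eq_id f ▸ hf))

lemma maxProperSieve_eq_bot {X Y : WalkingParallelPair} (f : Y ⟶ X) (hY : Y ≠ X) :
    maxProperSieve Y = ⊥ := by
  ext Z g
  exact ⟨fun hZ => ((eq_or_eq_of_comp g f).resolve_left hZ |> hY).elim, False.elim⟩

lemma mem_properlyCovered_iff {J : GrothendieckTopology WalkingParallelPair}
    {X : WalkingParallelPair} : X ∈ J.properlyCovered ↔ maxProperSieve X ∈ J X :=
  ⟨fun ⟨_, hS, hne⟩ => J.superset_covering (le_maxProperSieve hne) hS,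
    fun h => ⟨_, h, maxProperSieve_ne_top X⟩⟩

lemma properlyCovered_ofProperlyCovered (P : Set WalkingParallelPair) :
    (ofProperlyCovered P).properlyCovered = P := by
  refine (properlyCovered_ofProperlyCovered_subset P).antisymm fun X hX => ?_
  refine mem_properlyCovered_iff.mpr fun Y f hf => ?_
  obtain rfl : Y = X := not_not.mp hf
  exact hX

lemma ofProperlyCovered_properlyCovered (J : GrothendieckTopology WalkingParallelPair) :
    ofProperlyCovered J.properlyCovered = J := by
  refine le_antisymm (fun X S hS => ?_) (le_ofProperlyCovered_properlyCovered J)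
  by_cases htop : S = ⊤
  · exact htop ▸ J.top_mem X
  have hX := hS (𝟙 X) (mt S.id_mem_iff_eq_top.mp htop)
  -- `Y ≠ X` forces `maxProperSieve Y = ⊥`, which covers `Y` once `Y` is properly covered.
  refine J.transitive (mem_properlyCovered_iff.mp hX) S fun Y f (hY : Y ≠ X) => ?_
  by_cases hSf : S f
  · exact S.pullback_eq_top_of_mem hSf ▸ J.top_mem Y
  · refine J.superset_covering ?_ (mem_properlyCovered_iff.mp (hS f hSf))
    exact maxProperSieve_eq_bot f hY ▸ bot_le

def grothendieckTopologyEquivSet :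
    GrothendieckTopology WalkingParallelPair ≃ Set WalkingParallelPair where
  toFun J := J.properlyCovered
  invFun := ofProperlyCovered
  left_inv := ofProperlyCovered_properlyCovered
  right_inv := properlyCovered_ofProperlyCovered

end CategoryTheory.Limits.WalkingParallelPair

/-- On the category with two objects V, E and two parallel morphisms s, t : V → E
(the walking parallel pair, whose presheaves are directed graphs), there are exactly
4 Grothendieck topologies. -/
theorem four_grothendieck_topologies :
    Nat.card (GrothendieckTopology WalkingParallelPair) = 4 := by
  rw [Nat.card_congr WalkingParallelPair.grothendieckTopologyEquivSet,
    Nat.card_eq_fintype_card, Fintype.card_set]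
  rfl
end
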